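/- Let Q_{4n} be the binary dihedral group of order 4n generated by a, b with a^n = b^2, b^4 = 1, aba = b. The rational group algebra ℚ[Q_{4n}] contains as a direct summand, for each odd divisor d of n, the ℚ-subalgebra of the real quaternions generated by ℚ(ζ_{2n/d}) ⊂ ℝ[i] and j; in particular dim_ℚ ℚ[D_{2n}] + Σ_{d | m} 2φ(2n/d) = 4n, where m is the odd part of 4n. -/

import Mathlib

/-!
For odd `d`, the quaternions `ζ = cos (πd/n) + i sin (πd/n)` and `j` satisfy the defining relations
of `Q_{4n}`: `ζ ^ (2n) = 1`, `j² = -1 = ζ ^ n` (as `d` is odd) and `ζ j ζ = j`. Hence `a ↦ ζ`,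
`b ↦ j` extends to an algebra map `ℚ[Q_{4n}] → ℍ`, whose range is generated by the images of the
group elements, i.e. by `ζ` and `j`.

For the count, `n = 2^k m`, and for `d ∣ m` multiplicativity of `φ` gives
`φ (2n/d) = 2^k φ (m/d)`, so `Σ_{d ∣ m} φ (2n/d) = 2^k Σ_{e ∣ m} φ e = 2^k m = n`.
-/

open Real Quaternion

section PowVal

variable {M : Type*} [Monoid M] {N : ℕ} {x y : M}

theorem pow_val_natCast (hx : x ^ N = 1) (k : ℕ) : x ^ (k : ZMod N).val = x ^ k := by
  rw [ZMod.val_natCast, ← pow_eq_pow_mod _ hx]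

theorem pow_mul_mul_pow_of_mul_mul_eq (h : x * y * x = y) (k : ℕ) : x ^ k * y * x ^ k = y := by
  induction k with
  | zero => simp
  | succ k ih =>
    nth_rewrite 1 [pow_succ']
    rw [pow_succ]
    calc _ = x * (x ^ k * y * x ^ k) * x := by simp only [mul_assoc]
      _ = y := by rw [ih, h]

variable [NeZero N]

theorem pow_val_add (hx : x ^ N = 1) (i j : ZMod N) :
    x ^ (i + j).val = x ^ i.val * x ^ j.val := by
  rw [ZMod.val_add, ← pow_eq_pow_mod _ hx, pow_add]

theorem pow_val_mul_pow_val_neg (hx : x ^ N = 1) (i : ZMod N) :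
    x ^ i.val * x ^ (-i).val = 1 := by
  rw [← pow_val_add hx, add_neg_cancel, ZMod.val_zero, pow_zero]

end PowVal

namespace QuaternionGroup

variable {n : ℕ} [NeZero n] {M : Type*} [Monoid M] {x y : M}

theorem pow_val_mul_eq_mul_pow_val_neg (hx : x ^ (2 * n) = 1) (hxy : x * y * x = y)
    (i : ZMod (2 * n)) : x ^ i.val * y = y * x ^ (-i).val := by
  conv_rhs => rw [← pow_mul_mul_pow_of_mul_mul_eq hxy i.val]
  rw [mul_assoc _ (x ^ i.val), pow_val_mul_pow_val_neg hx, mul_one]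

def lift (x y : M) (hx : x ^ (2 * n) = 1) (hy : y * y = x ^ n) (hxy : x * y * x = y) :
    QuaternionGroup n →* M where
  toFun
    | a i => x ^ i.val
    | xa i => y * x ^ i.val
  map_one' := by
    show x ^ (0 : ZMod (2 * n)).val = 1
    rw [ZMod.val_zero, pow_zero]
  map_mul' := by
    rintro (i | i) (j | j)
    · simp only [a_mul_a, pow_val_add hx]
    · simp only [a_mul_xa, ← neg_add_eq_sub, pow_val_add hx, ← mul_assoc,
        pow_val_mul_eq_mul_pow_val_neg hx hxy]
    · simp only [xa_mul_a, pow_val_add hx, mul_assoc]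
    · simp only [xa_mul_xa]
      rw [add_sub_assoc, ← neg_add_eq_sub, pow_val_add hx, pow_val_add hx, pow_val_natCast hx,
        mul_assoc y, ← mul_assoc _ y, pow_val_mul_eq_mul_pow_val_neg hx hxy, ← hy]
      simp only [mul_assoc]

@[simp]
theorem lift_a (hx : x ^ (2 * n) = 1) (hy : y * y = x ^ n) (hxy : x * y * x = y)
    (i : ZMod (2 * n)) : lift x y hx hy hxy (a i) = x ^ i.val := rfl

@[simp]
theorem lift_xa (hx : x ^ (2 * n) = 1) (hy : y * y = x ^ n) (hxy : x * y * x = y)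
    (i : ZMod (2 * n)) : lift x y hx hy hxy (xa i) = y * x ^ i.val := rfl

theorem adjoin_range_lift (R : Type*) {A : Type*} [CommSemiring R] [Semiring A] [Algebra R A]
    {x y : A} (hx : x ^ (2 * n) = 1) (hy : y * y = x ^ n) (hxy : x * y * x = y) :
    Algebra.adjoin R (Set.range (lift x y hx hy hxy)) = Algebra.adjoin R {x, y} := by
  have hxmem : x ∈ Algebra.adjoin R {x, y} := Algebra.subset_adjoin (Set.mem_insert x _)
  have hymem : y ∈ Algebra.adjoin R {x, y} := Algebra.subset_adjoin (Set.mem_insert_of_mem x rfl)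
  refine le_antisymm (Algebra.adjoin_le ?_) (Algebra.adjoin_mono ?_)
  · rintro _ ⟨i | i, rfl⟩
    · exact pow_mem hxmem _
    · exact mul_mem hymem (pow_mem hxmem _)
  · refine Set.insert_subset ⟨a ((1 : ℕ) : ZMod (2 * n)), ?_⟩
      (Set.singleton_subset_iff.mpr ⟨xa 0, ?_⟩)
    · rw [lift_a, pow_val_natCast hx, pow_one]
    · rw [lift_xa, ZMod.val_zero, pow_zero, mul_one]

end QuaternionGroup

theorem MonoidAlgebra.range_lift {R G A : Type*} [CommSemiring R] [Monoid G] [Semiring A]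
    [Algebra R A] (φ : G →* A) :
    (lift R A G φ).range = Algebra.adjoin R (Set.range φ) := by
  refine le_antisymm ?_ (Algebra.adjoin_le ?_)
  · rintro _ ⟨x, rfl⟩
    induction x using MonoidAlgebra.induction_on with
    | of g => simpa using Algebra.subset_adjoin (Set.mem_range_self g)
    | add x y hx hy => simpa using add_mem hx hy
    | smul r x hx => simpa using Subalgebra.smul_mem _ hx r
  · rintro _ ⟨g, rfl⟩
    exact ⟨of R G g, lift_of φ g⟩

noncomputable def quaternionCis (θ : ℝ) : ℍ[ℝ] := ⟨cos θ, sin θ, 0, 0⟩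

noncomputable def quaternionJ : ℍ[ℝ] := ⟨0, 0, 1, 0⟩

theorem quaternionCis_add (α β : ℝ) :
    quaternionCis (α + β) = quaternionCis α * quaternionCis β := by
  ext <;> simp only [re_mul, imI_mul, imJ_mul, imK_mul] <;> simp [quaternionCis, cos_add, sin_add]
  ring

theorem quaternionCis_zero : quaternionCis 0 = 1 := by
  ext <;> simp [quaternionCis]

theorem quaternionCis_pi : quaternionCis π = -1 := by
  ext <;> simp [quaternionCis]

theorem quaternionCis_pow (θ : ℝ) (k : ℕ) : quaternionCis θ ^ k = quaternionCis (k * θ) := by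
  induction k with
  | zero => simp [quaternionCis_zero]
  | succ k ih => rw [pow_succ, ih, ← quaternionCis_add]; congr 1; push_cast; ring

theorem quaternionCis_nat_mul_pi (k : ℕ) : quaternionCis (k * π) = (-1) ^ k := by
  rw [← quaternionCis_pow, quaternionCis_pi]

theorem quaternionCis_pi_mul_div_pow {n : ℕ} (hn : n ≠ 0) (d : ℕ) :
    quaternionCis (π * d / n) ^ n = (-1) ^ d := by
  rw [quaternionCis_pow, ← quaternionCis_nat_mul_pi]
  congr 1
  field_simp

theorem quaternionCis_mul_quaternionJ (θ : ℝ) :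
    quaternionCis θ * quaternionJ = quaternionJ * quaternionCis (-θ) := by
  ext <;> simp only [re_mul, imI_mul, imJ_mul, imK_mul] <;> simp [quaternionCis, quaternionJ]

theorem quaternionCis_mul_quaternionJ_mul_quaternionCis (θ : ℝ) :
    quaternionCis θ * quaternionJ * quaternionCis θ = quaternionJ := by
  rw [quaternionCis_mul_quaternionJ, mul_assoc, ← quaternionCis_add, neg_add_cancel,
    quaternionCis_zero, mul_one]

theorem quaternionJ_mul_self : quaternionJ * quaternionJ = -1 := by
  ext <;> simp only [re_mul, imI_mul, imJ_mul, imK_mul] <;> simp [quaternionJ]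

theorem exists_algHom_range_eq_adjoin_quaternionCis (R : Type*) [CommSemiring R]
    [Algebra R ℍ[ℝ]] {n d : ℕ} [NeZero n] (hd : Odd d) :
    ∃ f : MonoidAlgebra R (QuaternionGroup n) →ₐ[R] ℍ[ℝ],
      f.range = Algebra.adjoin R {quaternionCis (π * d / n), quaternionJ} := by
  have hpow := quaternionCis_pi_mul_div_pow (NeZero.ne n) d
  have hx : quaternionCis (π * d / n) ^ (2 * n) = 1 := by
    rw [pow_mul', hpow, ← pow_mul, pow_mul', neg_one_sq, one_pow]
  have hy : quaternionJ * quaternionJ = quaternionCis (π * d / n) ^ n := by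
    rw [quaternionJ_mul_self, hpow, hd.neg_one_pow]
  let ρ := QuaternionGroup.lift _ _ hx hy (quaternionCis_mul_quaternionJ_mul_quaternionCis _)
  exact ⟨MonoidAlgebra.lift R ℍ[ℝ] _ ρ, by
    rw [MonoidAlgebra.range_lift, QuaternionGroup.adjoin_range_lift]⟩

section Totient

open scoped Nat

theorem Nat.totient_two_pow_succ_mul_of_odd (k : ℕ) {m : ℕ} (hm : Odd m) :
    φ (2 ^ (k + 1) * m) = 2 ^ k * φ m := by
  rw [Nat.totient_mul ((Nat.coprime_two_left.mpr hm).pow_left _),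
    Nat.totient_prime_pow_succ Nat.prime_two, Nat.add_one_sub_one, mul_one]

theorem Nat.sum_divisors_totient_two_pow_succ_mul_div (k : ℕ) {m : ℕ} (hm : Odd m) :
    ∑ d ∈ m.divisors, φ (2 ^ (k + 1) * m / d) = 2 ^ k * m := by
  calc ∑ d ∈ m.divisors, φ (2 ^ (k + 1) * m / d)
      = ∑ d ∈ m.divisors, 2 ^ k * φ (m / d) := Finset.sum_congr rfl fun d hd => by
        have hdm := Nat.dvd_of_mem_divisors hd
        rw [Nat.mul_div_assoc _ hdm,
          Nat.totient_two_pow_succ_mul_of_odd k (hm.of_dvd_nat (Nat.div_dvd_of_dvd hdm))]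
    _ = 2 ^ k * m := by rw [← Finset.mul_sum, Nat.sum_div_divisors, Nat.sum_totient]

theorem exists_eq_two_pow_mul_of_four_mul_eq {n r m : ℕ} (hm : Odd m) (h : 4 * n = 2 ^ r * m) :
    ∃ k, n = 2 ^ k * m := by
  match r, hm with
  | 0, ⟨t, ht⟩ => omega
  | 1, ⟨t, ht⟩ => omega
  | k + 2, _ => exact ⟨k, Nat.eq_of_mul_eq_mul_left four_pos (h.trans (by ring))⟩

theorem two_mul_add_sum_two_mul_totient {n r m : ℕ} (hm : Odd m) (h : 4 * n = 2 ^ r * m) :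
    2 * n + ∑ d ∈ m.divisors, 2 * φ (2 * n / d) = 4 * n := by
  obtain ⟨k, rfl⟩ := exists_eq_two_pow_mul_of_four_mul_eq hm h
  rw [← Finset.mul_sum, ← mul_assoc, ← pow_succ',
    Nat.sum_divisors_totient_two_pow_succ_mul_div k hm]
  ring

end Totient

/-- Let `Q_{4n}` be the binary dihedral (dicyclic) group of order `4n` (in Mathlib,
`QuaternionGroup n`), and write `4n = 2^r·m` with `m` odd. For each divisor `d` of `m`
the rational group algebra `ℚ[Q_{4n}]` surjects onto the `ℚ`-subalgebra of the real
quaternions generated by `ℚ(ζ_{2n/d}) ⊆ ℝ[i]` (where `ζ_{2n/d} = cos(πd/n) + i·sin(πd/n)`)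
and `j`; in particular `dim_ℚ ℚ[D_{2n}] + Σ_{d ∣ m} 2·φ(2n/d) = 4n`. -/
theorem stmt_6 (n : ℕ) (hn : 0 < n) (r m : ℕ) (hm : Odd m) (h4n : 4 * n = 2 ^ r * m) :
    (∀ d ∈ m.divisors,
      ∃ f : MonoidAlgebra ℚ (QuaternionGroup n) →ₐ[ℚ] Quaternion ℝ,
        f.range = Algebra.adjoin ℚ
          {(⟨Real.cos (Real.pi * d / n), Real.sin (Real.pi * d / n), 0, 0⟩ : Quaternion ℝ),
           (⟨0, 0, 1, 0⟩ : Quaternion ℝ)}) ∧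
    2 * n + ∑ d ∈ m.divisors, 2 * Nat.totient (2 * n / d) = 4 * n := by
  have : NeZero n := ⟨hn.ne'⟩
  exact ⟨fun d hd => exists_algHom_range_eq_adjoin_quaternionCis ℚ
      (hm.of_dvd_nat (Nat.dvd_of_mem_divisors hd)),
    two_mul_add_sum_two_mul_totient hm h4n⟩
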